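/- arXiv:1012.3508 — 3 statements merged into one kernel-verified Lean document; each statement's English description precedes it below -/
import Mathlib

section
/- Let α, β be real numbers with α > 0, β > 0, α ≠ 1, and suppose log_α(β) is irrational (i.e., there are no integers m, n, not both zero, with α^m = β^n). Then the set {α^m · β^n : m, n ∈ ℤ} is dense in the positive reals. -/
theorem stmt_0 (α β : ℝ) (hα : 0 < α) (hβ : 0 < β) (hα1 : α ≠ 1)
    (hirr : ∀ m n : ℤ, ¬(m = 0 ∧ n = 0) → α ^ m ≠ β ^ n) :
    ∀ x : ℝ, 0 < x → x ∈ closure {y : ℝ | ∃ m n : ℤ, y = α ^ m * β ^ n} := by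
  intro x hx
  set a := Real.log α with ha
  set b := Real.log β with hb
  -- β ≠ 1
  have hβ1 : β ≠ 1 := by
    intro h
    exact hirr 0 1 (by simp) (by simp [h])
  have hexp : ∀ m n : ℤ, Real.exp ((m : ℝ) * a + (n : ℝ) * b) = α ^ m * β ^ n := by
    intro m n
    rw [Real.exp_add, ← Real.log_zpow, ← Real.log_zpow, Real.exp_log (zpow_pos hα m),
      Real.exp_log (zpow_pos hβ n)]
  -- subgroup
  set T : AddSubgroup ℝ :=
    { carrier := {t : ℝ | ∃ m n : ℤ, t = (m : ℝ) * a + (n : ℝ) * b}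
      zero_mem' := ⟨0, 0, by simp⟩
      add_mem' := by
        rintro _ _ ⟨m, n, rfl⟩ ⟨m', n', rfl⟩
        exact ⟨m + m', n + n', by push_cast; ring⟩
      neg_mem' := by
        rintro _ ⟨m, n, rfl⟩
        exact ⟨-m, -n, by push_cast; ring⟩ } with hT
  have hdense : Dense (T : Set ℝ) := by
    rcases T.dense_or_cyclic with h | ⟨c, hc⟩
    · exact h
    · exfalso
      have haT : a ∈ T := ⟨1, 0, by simp⟩
      have hbT : b ∈ T := ⟨0, 1, by simp⟩
      rw [hc, AddSubgroup.mem_closure_singleton] at haT hbT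
      obtain ⟨k, hk⟩ := haT
      obtain ⟨l, hl⟩ := hbT
      have hb0 : b ≠ 0 := fun h => hβ1 (by
        have := Real.exp_log hβ
        rw [← hb, h, Real.exp_zero] at this; exact this.symm)
      have hl0 : l ≠ 0 := by
        rintro rfl
        simp at hl
        exact hb0 hl.symm
      have key : (l : ℝ) * a = (k : ℝ) * b := by
        rw [← hk, ← hl]
        push_cast [zsmul_eq_mul]
        ring
      have : α ^ l = β ^ k := by
        have h1 : Real.exp ((l : ℝ) * a) = α ^ l := by
          rw [← Real.log_zpow, Real.exp_log (zpow_pos hα l)]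
        have h2 : Real.exp ((k : ℝ) * b) = β ^ k := by
          rw [← Real.log_zpow, Real.exp_log (zpow_pos hβ k)]
        rw [← h1, ← h2, key]
      exact hirr l k (fun h => hl0 h.1) this
  have hlog : Real.log x ∈ closure (T : Set ℝ) := hdense _
  have hmaps : Real.exp '' (T : Set ℝ) ⊆ {y : ℝ | ∃ m n : ℤ, y = α ^ m * β ^ n} := by
    rintro _ ⟨t, ⟨m, n, rfl⟩, rfl⟩
    exact ⟨m, n, (hexp m n)⟩
  have : x ∈ closure (Real.exp '' (T : Set ℝ)) := by
    have := image_closure_subset_closure_image (f := Real.exp) Real.continuous_exp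
      (s := (T : Set ℝ))
    have hx' : x ∈ Real.exp '' closure (T : Set ℝ) :=
      ⟨Real.log x, hlog, Real.exp_log hx⟩
    exact this hx'
  exact closure_mono hmaps this
end

section
/- Let n ≥ 1 and let D ⊆ ℝ be a set with D ⊆ [1, ∞) such that |a − b| ≥ 1 for all distinct a, b ∈ D. Define h : ℝ_{>0} × ℝⁿ → ℝ by h(x₀, x₁, …, xₙ) = x₀ + Σ_{i=1}^{n} xᵢ/(n x₀)^i, and g : Dⁿ → ℝ by g(d₁, …, dₙ) = h(max{d₁, …, dₙ}, d₁, …, dₙ). Then g is injective. -/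
private lemma aux_S (n : ℕ) [NeZero n] (M : ℝ) (hM : 1 ≤ M) (d : Fin n → ℝ)
    (hd1 : ∀ i, 1 ≤ d i) (hdM : ∀ i, d i ≤ M) :
    0 < ∑ i : Fin n, d i / ((n : ℝ) * M) ^ (i.val + 1) ∧
      ∑ i : Fin n, d i / ((n : ℝ) * M) ^ (i.val + 1) ≤ 1 := by
  have hn : 1 ≤ n := Nat.one_le_iff_ne_zero.mpr (NeZero.ne n)
  have hn' : (1 : ℝ) ≤ n := by exact_mod_cast hn
  have hc1 : (1 : ℝ) ≤ (n : ℝ) * M := by nlinarith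
  have hcpos : (0 : ℝ) < (n : ℝ) * M := by linarith
  constructor
  · apply Finset.sum_pos
    · intro i _
      have h1 : (0:ℝ) < ((n : ℝ) * M) ^ (i.val + 1) := pow_pos hcpos _
      have := hd1 i
      positivity
    · exact Finset.univ_nonempty
  · have hterm : ∀ i ∈ (Finset.univ : Finset (Fin n)),
        d i / ((n : ℝ) * M) ^ (i.val + 1) ≤ 1 / n := by
      intro i _
      have hp : ((n : ℝ) * M) ^ 1 ≤ ((n : ℝ) * M) ^ (i.val + 1) :=
        pow_le_pow_right₀ hc1 (by omega)
      rw [pow_one] at hp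
      have hppos : (0:ℝ) < ((n : ℝ) * M) ^ (i.val + 1) := pow_pos hcpos _
      have h1 : d i / ((n : ℝ) * M) ^ (i.val + 1) ≤ M / ((n : ℝ) * M) ^ (i.val + 1) :=
        div_le_div_of_nonneg_right (hdM i) hppos.le
      have h2 : M / ((n : ℝ) * M) ^ (i.val + 1) ≤ M / ((n : ℝ) * M) :=
        div_le_div_of_nonneg_left (by linarith) hcpos hp
      have h3 : M / ((n : ℝ) * M) = 1 / n := by
        rw [div_eq_div_iff (ne_of_gt hcpos) (by positivity)]; ring
      linarith
    calc ∑ i : Fin n, d i / ((n : ℝ) * M) ^ (i.val + 1)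
        ≤ (Finset.univ : Finset (Fin n)).card • ((1:ℝ) / n) :=
          Finset.sum_le_card_nsmul _ _ _ hterm
      _ = 1 := by
          rw [Finset.card_univ, Fintype.card_fin, nsmul_eq_mul]
          field_simp

private lemma aux_digits (n : ℕ) [NeZero n] (M : ℝ) (hM : 1 ≤ M) (d e : Fin n → ℝ)
    (hd1 : ∀ i, 1 ≤ d i) (hdM : ∀ i, d i ≤ M) (he1 : ∀ i, 1 ≤ e i) (heM : ∀ i, e i ≤ M)
    (k : Fin n) (hlt : ∀ i, i < k → d i = e i) (hk : e k + 1 ≤ d k)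
    (hsum : ∑ i : Fin n, d i / ((n : ℝ) * M) ^ (i.val + 1)
          = ∑ i : Fin n, e i / ((n : ℝ) * M) ^ (i.val + 1)) : False := by
  have hn : 1 ≤ n := Nat.one_le_iff_ne_zero.mpr (NeZero.ne n)
  have hn' : (1 : ℝ) ≤ n := by exact_mod_cast hn
  set c : ℝ := (n : ℝ) * M with hc
  have hc1 : (1 : ℝ) ≤ c := by rw [hc]; nlinarith
  have hcpos : (0 : ℝ) < c := by linarith
  set f : Fin n → ℝ := fun i => (d i - e i) / c ^ (i.val + 1) with hf
  have hsum0 : ∑ i : Fin n, f i = 0 := by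
    simp only [hf, sub_div, Finset.sum_sub_distrib]
    rw [hsum]; ring
  have hpk : (0:ℝ) < c ^ (k.val + 2) := pow_pos hcpos _
  have hfk : c / c ^ (k.val + 2) ≤ f k := by
    have h1 : (1:ℝ) ≤ d k - e k := by linarith
    have hpk1 : (0:ℝ) < c ^ (k.val + 1) := pow_pos hcpos _
    have heq : c / c ^ (k.val + 2) = 1 / c ^ (k.val + 1) := by
      rw [div_eq_div_iff (ne_of_gt hpk) (ne_of_gt hpk1), pow_succ]; ring
    rw [heq, hf]
    exact div_le_div_of_nonneg_right h1 hpk1.le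
  have hbound : ∀ i ∈ Finset.univ.erase k, -((M - 1) / c ^ (k.val + 2)) ≤ f i := by
    intro i hi
    have hik : i ≠ k := (Finset.mem_erase.mp hi).1
    rcases lt_or_gt_of_ne hik with h | h
    · have : f i = 0 := by simp [hf, hlt i h]
      rw [this]
      have : (0:ℝ) ≤ (M - 1) / c ^ (k.val + 2) := div_nonneg (by linarith) hpk.le
      linarith
    · have hpi : (0:ℝ) < c ^ (i.val + 1) := pow_pos hcpos _
      have hpow : c ^ (k.val + 2) ≤ c ^ (i.val + 1) := by
        apply pow_le_pow_right₀ hc1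
        have : k.val < i.val := h
        omega
      have h1 : -((M - 1) / c ^ (i.val + 1)) ≤ f i := by
        rw [hf, neg_div', neg_sub]
        exact div_le_div_of_nonneg_right (by have := hd1 i; have := heM i; linarith) hpi.le
      have h2 : (M - 1) / c ^ (i.val + 1) ≤ (M - 1) / c ^ (k.val + 2) := by
        rcases eq_or_lt_of_le hM with hM1 | hM1
        · simp [← hM1]
        · exact div_le_div_of_nonneg_left (by linarith) hpk hpow
      linarith
  have hcard : (Finset.univ.erase k).card = n - 1 := by
    rw [Finset.card_erase_of_mem (Finset.mem_univ k), Finset.card_univ, Fintype.card_fin]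
  have hsumlow : ((n - 1 : ℕ) : ℝ) * (-((M - 1) / c ^ (k.val + 2)))
      ≤ ∑ i ∈ Finset.univ.erase k, f i := by
    have := Finset.card_nsmul_le_sum (Finset.univ.erase k) f
      (-((M - 1) / c ^ (k.val + 2))) hbound
    rwa [hcard, nsmul_eq_mul] at this
  have hsplit : ∑ i ∈ Finset.univ.erase k, f i + f k = ∑ i : Fin n, f i :=
    Finset.sum_erase_add _ _ (Finset.mem_univ k)
  have hcast : ((n - 1 : ℕ) : ℝ) = (n : ℝ) - 1 := by
    rw [Nat.cast_sub hn]; norm_num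
  rw [hcast] at hsumlow
  -- 0 = ∑ f ≥ c/c^(k+2) - (n-1)(M-1)/c^(k+2)
  have hfinal : c / c ^ (k.val + 2) - ((n:ℝ) - 1) * ((M - 1) / c ^ (k.val + 2)) ≤ 0 := by
    rw [← hsum0, ← hsplit]
    have := hsumlow
    nlinarith [hfk]
  have h5 : c - ((n:ℝ) - 1) * (M - 1) ≤ 0 := by
    have h := mul_le_mul_of_nonneg_right hfinal hpk.le
    rw [zero_mul, sub_mul, div_mul_cancel₀ _ (ne_of_gt hpk), mul_assoc,
      div_mul_cancel₀ _ (ne_of_gt hpk)] at h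
    exact h
  rw [hc] at h5
  nlinarith

theorem stmt_7 (n : ℕ) [NeZero n] (D : Set ℝ) (hD : D ⊆ Set.Ici 1)
    (hsep : ∀ a ∈ D, ∀ b ∈ D, a ≠ b → 1 ≤ |a - b|)
    (g : (Fin n → ℝ) → ℝ)
    (hg : ∀ d : Fin n → ℝ, g d = (⨆ i, d i) +
      ∑ i : Fin n, d i / ((n : ℝ) * ⨆ j, d j) ^ (i.val + 1)) :
    ∀ d e : Fin n → ℝ, (∀ i, d i ∈ D) → (∀ i, e i ∈ D) → g d = g e → d = e := by
  intro d e hd he hge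
  -- facts about the sups
  have hsupfacts : ∀ (x : Fin n → ℝ), (∀ i, x i ∈ D) →
      (⨆ i, x i) ∈ D ∧ 1 ≤ (⨆ i, x i) ∧ (∀ i, x i ≤ ⨆ j, x j) ∧ (∀ i, 1 ≤ x i) := by
    intro x hx
    obtain ⟨i₀, hi₀⟩ := exists_eq_ciSup_of_finite (f := x)
    have hub : ∀ i, x i ≤ ⨆ j, x j := fun i =>
      le_ciSup (Set.Finite.bddAbove (Set.finite_range x)) i
    have h1 : ∀ i, 1 ≤ x i := fun i => hD (hx i)
    exact ⟨hi₀ ▸ hx i₀, le_trans (h1 i₀) (hub i₀), hub, h1⟩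
  obtain ⟨hMD, hM1, hMub, hd1⟩ := hsupfacts d hd
  obtain ⟨hND, hN1, hNub, he1⟩ := hsupfacts e he
  set M := ⨆ i, d i with hM
  set N := ⨆ i, e i with hN
  obtain ⟨hSd0, hSd1⟩ := aux_S n M hM1 d hd1 hMub
  obtain ⟨hSe0, hSe1⟩ := aux_S n N hN1 e he1 hNub
  rw [hg d, hg e, ← hM, ← hN] at hge
  have hMN : M = N := by
    by_contra hne
    have habs := hsep M hMD N hND hne
    rcases lt_or_gt_of_ne hne with h | h
    · have : N - M ≥ 1 := by rw [abs_sub_comm] at habs; rw [abs_of_pos (by linarith)] at habs; linarith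
      linarith
    · have : M - N ≥ 1 := by rw [abs_of_pos (by linarith)] at habs; linarith
      linarith
  rw [← hMN] at hge hNub hSe0 hSe1
  have hsum : ∑ i : Fin n, d i / ((n : ℝ) * M) ^ (i.val + 1)
      = ∑ i : Fin n, e i / ((n : ℝ) * M) ^ (i.val + 1) := by linarith
  by_contra hne
  have hex : ∃ i, d i ≠ e i := by
    by_contra hall
    push_neg at hall
    exact hne (funext hall)
  set s : Finset (Fin n) := Finset.univ.filter (fun i => d i ≠ e i) with hs
  have hsne : s.Nonempty := by
    obtain ⟨i, hi⟩ := hex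
    exact ⟨i, by simp [hs, hi]⟩
  set k := s.min' hsne with hk
  have hkmem : k ∈ s := s.min'_mem hsne
  have hkne : d k ≠ e k := by
    have := Finset.mem_filter.mp hkmem
    exact this.2
  have hlt : ∀ i, i < k → d i = e i := by
    intro i hik
    by_contra hii
    have : i ∈ s := by simp [hs, hii]
    exact absurd (s.min'_le i this) (not_le.mpr hik)
  have habs := hsep (d k) (hd k) (e k) (he k) hkne
  rcases lt_or_gt_of_ne hkne with h | h
  · -- e k > d k : apply with e d swapped
    have h1 : d k + 1 ≤ e k := by
      rw [abs_sub_comm, abs_of_pos (by linarith)] at habs; linarith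
    exact aux_digits n M hM1 e d he1 hNub hd1 hMub k
      (fun i hik => (hlt i hik).symm) h1 hsum.symm
  · have h1 : e k + 1 ≤ d k := by
      rw [abs_of_pos (by linarith)] at habs; linarith
    exact aux_digits n M hM1 d e hd1 hMub he1 hNub k hlt h1 hsum
end

section
/- Let n ≥ 1 and let D ⊆ [1, ∞) be such that |a − b| ≥ 1 for all distinct a, b ∈ D. With g : Dⁿ → ℝ defined by g(d₁, …, dₙ) = m + Σ_{i=1}^{n} dᵢ/(n m)^i where m = max{d₁, …, dₙ}, the image g(Dⁿ) is discrete and closed in ℝ. -/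
def DiscreteSet (D : Set ℝ) : Prop :=
  ∀ d ∈ D, ∃ ε > 0, ∀ x ∈ D, |x - d| < ε → x = d

/-!
Each coordinate of `d` is at most `max d ≤ g d`, so a value `g d ≤ N` comes from a tuple with
entries in `D ∩ [1, N]`, which is finite because the points of `D` are `1`-separated. Hence the
image meets every half-line `(-∞, N]` in a finite set, and such a set is discrete and closed.
-/

open Set Filter Topology

theorem Set.Finite.inter_Icc_of_one_le_abs_sub {R : Type*} [Ring R] [LinearOrder R]
    [IsStrictOrderedRing R] [FloorRing R] {D : Set R}
    (hsep : ∀ a ∈ D, ∀ b ∈ D, a ≠ b → 1 ≤ |a - b|) (a b : R) :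
    (D ∩ Icc a b).Finite := by
  refine Set.Finite.of_finite_image (f := Int.floor) ((Set.finite_Icc ⌊a⌋ ⌊b⌋).subset ?_) ?_
  · rintro _ ⟨x, ⟨-, hax, hxb⟩, rfl⟩
    exact ⟨Int.floor_le_floor hax, Int.floor_le_floor hxb⟩
  · rintro x ⟨hx, -⟩ y ⟨hy, -⟩ hxy
    by_contra hne
    exact (hsep x hx y hy hne).not_gt (Int.abs_sub_lt_one_of_floor_eq_floor hxy)

theorem le_iSup_add_sum_div_pow {n : ℕ} (d : Fin n → ℝ) (hd : ∀ i, 0 ≤ d i) (i : Fin n) :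
    d i ≤ (⨆ j, d j) + ∑ j : Fin n, d j / ((n : ℝ) * ⨆ k, d k) ^ (j.val + 1) := by
  have hsum : 0 ≤ ∑ j : Fin n, d j / ((n : ℝ) * ⨆ k, d k) ^ (j.val + 1) :=
    Finset.sum_nonneg fun j _ => div_nonneg (hd j) (by positivity [Real.iSup_nonneg hd])
  linarith [le_ciSup (Set.finite_range d).bddAbove i]

theorem finite_image_pi_inter_Iic {ι : Type*} [Finite ι] {D : Set ℝ} {a : ℝ}
    (hD : D ⊆ Ici a)
    (hsep : ∀ x ∈ D, ∀ y ∈ D, x ≠ y → 1 ≤ |x - y|) {g : (ι → ℝ) → ℝ}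
    (hle : ∀ d : ι → ℝ, (∀ i, d i ∈ D) → ∀ i, d i ≤ g d) (N : ℝ) :
    ({y : ℝ | ∃ d : ι → ℝ, (∀ i, d i ∈ D) ∧ y = g d} ∩ Iic N).Finite := by
  have hbox := Set.Finite.pi fun _ : ι => Set.Finite.inter_Icc_of_one_le_abs_sub hsep a N
  refine (hbox.image g).subset ?_
  rintro _ ⟨⟨d, hd, rfl⟩, hdN⟩
  exact ⟨d, fun i _ => ⟨hd i, hD (hd i), (hle d hd i).trans hdN⟩, rfl⟩

section FiniteInterIic

variable {α : Type*} [LinearOrder α] [TopologicalSpace α] [OrderTopology α] [NoMaxOrder α]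
  {S : Set α}

theorem eventually_mem_imp_eq_of_finite_inter_Iic (hS : ∀ N, (S ∩ Iic N).Finite) (y : α) :
    ∀ᶠ x in 𝓝 y, x ∈ S → x = y := by
  obtain ⟨N, hyN⟩ := exists_gt y
  have hF : ((S ∩ Iic N) \ {y}).Finite := (hS N).sdiff
  filter_upwards [hF.isClosed.isOpen_compl.mem_nhds (by simp), Iio_mem_nhds hyN]
    with x hxF hxN hxS
  by_contra hne
  exact hxF ⟨⟨hxS, hxN.le⟩, hne⟩

theorem isClosed_of_finite_inter_Iic (hS : ∀ N, (S ∩ Iic N).Finite) : IsClosed S := by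
  rw [← isOpen_compl_iff, isOpen_iff_eventually]
  intro y hy
  filter_upwards [eventually_mem_imp_eq_of_finite_inter_Iic hS y] with x hx hxS
  exact hy (hx hxS ▸ hxS)

end FiniteInterIic

theorem discreteSet_of_finite_inter_Iic {S : Set ℝ} (hS : ∀ N, (S ∩ Iic N).Finite) :
    DiscreteSet S := by
  intro y _
  obtain ⟨ε, hε, h⟩ :=
    Metric.eventually_nhds_iff.mp (eventually_mem_imp_eq_of_finite_inter_Iic hS y)
  exact ⟨ε, hε, fun x hx hxy => h (by rwa [Real.dist_eq]) hx⟩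

theorem stmt_8_general (n : ℕ) (D : Set ℝ) (hD : D ⊆ Set.Ici 1)
    (hsep : ∀ a ∈ D, ∀ b ∈ D, a ≠ b → 1 ≤ |a - b|)
    (g : (Fin n → ℝ) → ℝ)
    (hg : ∀ d : Fin n → ℝ, g d = (⨆ i, d i) +
      ∑ i : Fin n, d i / ((n : ℝ) * ⨆ j, d j) ^ (i.val + 1)) :
    DiscreteSet {y : ℝ | ∃ d : Fin n → ℝ, (∀ i, d i ∈ D) ∧ y = g d} ∧
    IsClosed {y : ℝ | ∃ d : Fin n → ℝ, (∀ i, d i ∈ D) ∧ y = g d} := by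
  have hle : ∀ d : Fin n → ℝ, (∀ i, d i ∈ D) → ∀ i, d i ≤ g d := fun d hd i =>
    hg d ▸ le_iSup_add_sum_div_pow d (fun j => zero_le_one.trans (hD (hd j))) i
  have hfin := finite_image_pi_inter_Iic hD hsep hle
  exact ⟨discreteSet_of_finite_inter_Iic hfin, isClosed_of_finite_inter_Iic hfin⟩

theorem stmt_8 (n : ℕ) [NeZero n] (D : Set ℝ) (hD : D ⊆ Set.Ici 1)
    (hsep : ∀ a ∈ D, ∀ b ∈ D, a ≠ b → 1 ≤ |a - b|)
    (g : (Fin n → ℝ) → ℝ)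
    (hg : ∀ d : Fin n → ℝ, g d = (⨆ i, d i) +
      ∑ i : Fin n, d i / ((n : ℝ) * ⨆ j, d j) ^ (i.val + 1)) :
    DiscreteSet {y : ℝ | ∃ d : Fin n → ℝ, (∀ i, d i ∈ D) ∧ y = g d} ∧
    IsClosed {y : ℝ | ∃ d : Fin n → ℝ, (∀ i, d i ∈ D) ∧ y = g d} :=
  stmt_8_general n D hD hsep g hg
end
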